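/- arXiv:1706.05269 — 3 statements merged into one kernel-verified Lean document; each statement's English description precedes it below -/
import Mathlib

section
/- For an n × n matrix A with nonnegative real entries a_{ij}, the largest eigenvalue (spectral radius) r(A) satisfies r(A) ≥ (1/n) Σ_{i<j} 2·√(a_{ij} a_{ji}) + (1/n) Σ_i a_{ii}, i.e., r(A) ≥ (1/n) Σ_{i,j} √(a_{ij} a_{ji}) where the sum ranges over all ordered pairs (i,j). -/
/-!
If `x > 0` and `A *ᵥ x ≤ r • x`, AM–GM gives `√(aᵢⱼ aⱼᵢ) ≤ (aᵢⱼ xⱼ / xᵢ + aⱼᵢ xᵢ / xⱼ) / 2`,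
and summing over all `i, j` turns the right-hand side into `∑ᵢ (A *ᵥ x)ᵢ / xᵢ ≤ n r`.
Such a positive eigenvector exists for the positive matrices `A + ε J` (`J` the all-ones
matrix): by Perron's argument, a maximiser of the Collatz–Wielandt value `max {t | t • x ≤ B *ᵥ x}`
over the simplex is one. As `ε → 0` these eigenpairs, which stay in a compact set, accumulate at
a real eigenpair of `A` obeying the same bound.
-/

open Set Filter Topology

lemma Real.sqrt_mul_le_half_add {u v : ℝ} (hu : 0 ≤ u) (hv : 0 ≤ v) :
    √(u * v) ≤ (u + v) / 2 := by
  rw [Real.sqrt_le_left (by positivity)]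
  nlinarith [sq_nonneg (u - v)]

section stdSimplex

variable {ι : Type*} [Fintype ι]

lemma ne_zero_of_mem_stdSimplex {x : ι → ℝ} (hx : x ∈ stdSimplex ℝ ι) : x ≠ 0 := by
  rintro rfl
  simpa using hx.2

lemma inv_sum_smul_mem_stdSimplex {y : ι → ℝ} (hy : 0 ≤ y) (hy₀ : y ≠ 0) :
    (∑ i, y i)⁻¹ • y ∈ stdSimplex ℝ ι := by
  obtain ⟨j, hj⟩ := Function.ne_iff.1 hy₀
  have hsum : 0 < ∑ i, y i :=
    Finset.sum_pos' (fun i _ => hy i) ⟨j, Finset.mem_univ j, (hy j).lt_of_ne' hj⟩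
  refine ⟨fun i => mul_nonneg (inv_nonneg.2 hsum.le) (hy i), ?_⟩
  simp [← Finset.mul_sum, hsum.ne']

end stdSimplex

lemma exists_gt_smul_le {ι : Type*} [Finite ι] {r : ℝ} {y w : ι → ℝ}
    (h : ∀ i, r * y i < w i) : ∃ t, r < t ∧ t • y ≤ w := by
  have : ∀ᶠ t in 𝓝 r, ∀ i, t * y i < w i :=
    eventually_all.2 fun i => (continuous_id.mul continuous_const).continuousAt.eventually_lt
      continuousAt_const (h i)
  obtain ⟨t, hrt, ht⟩ := this.exists_gt
  exact ⟨t, hrt, fun i => (ht i).le⟩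

namespace Matrix

variable {ι : Type*} [Fintype ι]

lemma sum_sqrt_mul_le_card_mul_of_mulVec_le {A : Matrix ι ι ℝ} (hA : ∀ i j, 0 ≤ A i j)
    {x : ι → ℝ} (hx : ∀ i, 0 < x i) {r : ℝ} (hAx : A *ᵥ x ≤ r • x) :
    ∑ i, ∑ j, √(A i j * A j i) ≤ Fintype.card ι * r := by
  set u : ι → ι → ℝ := fun i j => A i j * x j / x i
  have hu : ∀ i j, 0 ≤ u i j := fun i j => div_nonneg (mul_nonneg (hA i j) (hx j).le) (hx i).le
  have hrow : ∀ i, ∑ j, u i j ≤ r := fun i => by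
    rw [← Finset.sum_div, div_le_iff₀ (hx i)]
    exact hAx i
  calc ∑ i, ∑ j, √(A i j * A j i) = ∑ i, ∑ j, √(u i j * u j i) := by
        refine Finset.sum_congr rfl fun i _ => Finset.sum_congr rfl fun j _ => ?_
        congr 1
        simp only [u]
        field_simp [(hx i).ne', (hx j).ne']
    _ ≤ ∑ i, ∑ j, (u i j + u j i) / 2 := by
        gcongr with i _ j _
        exact Real.sqrt_mul_le_half_add (hu i j) (hu j i)
    _ = ∑ i, ∑ j, u i j := by
        simp only [add_div, Finset.sum_add_distrib]
        rw [Finset.sum_comm (f := fun i j => u j i / 2)]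
        simp only [← Finset.sum_add_distrib, add_halves]
    _ ≤ ∑ _i : ι, r := Finset.sum_le_sum fun i _ => hrow i
    _ = Fintype.card ι * r := by simp

lemma mulVec_nonneg {B : Matrix ι ι ℝ} (hB : ∀ i j, 0 ≤ B i j) {z : ι → ℝ} (hz : 0 ≤ z) :
    0 ≤ B *ᵥ z :=
  fun i => Finset.sum_nonneg fun j _ => mul_nonneg (hB i j) (hz j)

lemma mulVec_pos_of_pos {B : Matrix ι ι ℝ} (hB : ∀ i j, 0 < B i j) {z : ι → ℝ} (hz : 0 ≤ z)
    (hz₀ : z ≠ 0) (i : ι) : 0 < (B *ᵥ z) i := by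
  obtain ⟨j, hj⟩ := Function.ne_iff.1 hz₀
  exact Finset.sum_pos' (fun k _ => mul_nonneg (hB i k).le (hz k))
    ⟨j, Finset.mem_univ j, mul_pos (hB i j) ((hz j).lt_of_ne' hj)⟩

lemma le_sum_of_smul_le_mulVec {B : Matrix ι ι ℝ} (hB : ∀ i j, 0 ≤ B i j) {x : ι → ℝ}
    (hx : x ∈ stdSimplex ℝ ι) {t : ℝ} (h : t • x ≤ B *ᵥ x) : t ≤ ∑ i, ∑ j, B i j := by
  calc t = ∑ i, t * x i := by rw [← Finset.mul_sum, hx.2, mul_one]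
    _ ≤ ∑ i, (B *ᵥ x) i := Finset.sum_le_sum fun i _ => h i
    _ ≤ ∑ i, ∑ j, B i j := Finset.sum_le_sum fun i _ => Finset.sum_le_sum fun j _ =>
        mul_le_of_le_one_right (hB i j) (mem_Icc_of_mem_stdSimplex hx j).2

lemma exists_forall_smul_le_mulVec_le [Nonempty ι] {B : Matrix ι ι ℝ} (hB : ∀ i j, 0 ≤ B i j) :
    ∃ r : ℝ, ∃ x ∈ stdSimplex ℝ ι, r • x ≤ B *ᵥ x ∧
      ∀ t, ∀ y ∈ stdSimplex ℝ ι, t • y ≤ B *ᵥ y → t ≤ r := by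
  classical
  set K := (Icc (0 : ℝ) (∑ i, ∑ j, B i j) ×ˢ stdSimplex ℝ ι) ∩
    {p : ℝ × (ι → ℝ) | p.1 • p.2 ≤ B *ᵥ p.2}
  have hK : IsCompact K := (isCompact_Icc.prod (isCompact_stdSimplex ℝ ι)).inter_right
    (isClosed_le (by fun_prop) (by fun_prop))
  obtain ⟨i⟩ := ‹Nonempty ι›
  have hK₀ : K.Nonempty := ⟨(0, Pi.single i 1),
    ⟨⟨le_rfl, Finset.sum_nonneg fun i _ => Finset.sum_nonneg fun j _ => hB i j⟩,
      single_mem_stdSimplex ℝ i⟩,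
    by simpa using mulVec_nonneg hB (Pi.single_nonneg.2 zero_le_one)⟩
  obtain ⟨⟨r, x⟩, ⟨⟨⟨hr, -⟩, hx⟩, hrx⟩, hmax⟩ := hK.exists_isMaxOn hK₀ continuous_fst.continuousOn
  refine ⟨r, x, hx, hrx, fun t y hy hty => ?_⟩
  rcases lt_or_ge t 0 with ht | ht
  · exact ht.le.trans hr
  · exact hmax (show (t, y) ∈ K from ⟨⟨⟨ht, le_sum_of_smul_le_mulVec hB hy hty⟩, hy⟩, hty⟩)

/-- If `r • x ≤ B *ᵥ x` were strict somewhere, then `y = B *ᵥ x` would satisfy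
`r • y < B *ᵥ y` everywhere, so a slightly larger `t` would still satisfy `t • y ≤ B *ᵥ y`. -/
lemma mulVec_eq_smul_of_forall_smul_le_mulVec_le {B : Matrix ι ι ℝ} (hB : ∀ i j, 0 < B i j)
    {r : ℝ} {x : ι → ℝ} (hx : x ∈ stdSimplex ℝ ι) (hrx : r • x ≤ B *ᵥ x)
    (hmax : ∀ t, ∀ y ∈ stdSimplex ℝ ι, t • y ≤ B *ᵥ y → t ≤ r) : B *ᵥ x = r • x := by
  by_contra hne
  set y := B *ᵥ x
  have hy : 0 ≤ y := mulVec_nonneg (fun i j => (hB i j).le) hx.1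
  have hx₀ := ne_zero_of_mem_stdSimplex hx
  obtain ⟨j, -⟩ := Function.ne_iff.1 hx₀
  have hy₀ : y ≠ 0 := fun h => (mulVec_pos_of_pos hB hx.1 hx₀ j).ne' (congrFun h j)
  have hlt : ∀ i, r * y i < (B *ᵥ y) i := fun i => by
    have := mulVec_pos_of_pos hB (sub_nonneg.2 hrx) (sub_ne_zero.2 hne) i
    rwa [mulVec_sub, mulVec_smul, Pi.sub_apply, Pi.smul_apply, sub_pos] at this
  obtain ⟨t, hrt, hty⟩ := exists_gt_smul_le hlt
  refine hrt.not_ge (hmax t _ (inv_sum_smul_mem_stdSimplex hy hy₀) ?_)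
  rw [mulVec_smul, smul_comm]
  exact smul_le_smul_of_nonneg_left hty (inv_nonneg.2 (Finset.sum_nonneg fun i _ => hy i))

theorem exists_pos_eigenvector_of_pos [Nonempty ι] {B : Matrix ι ι ℝ} (hB : ∀ i j, 0 < B i j) :
    ∃ r : ℝ, 0 ≤ r ∧ ∃ x ∈ stdSimplex ℝ ι, (∀ i, 0 < x i) ∧ B *ᵥ x = r • x := by
  have hB' : ∀ i j, 0 ≤ B i j := fun i j => (hB i j).le
  obtain ⟨r, x, hx, hrx, hmax⟩ := exists_forall_smul_le_mulVec_le hB'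
  have hBx := mulVec_eq_smul_of_forall_smul_le_mulVec_le hB hx hrx hmax
  refine ⟨r, hmax 0 x hx (by simpa using mulVec_nonneg hB' hx.1), x, hx, fun i => ?_, hBx⟩
  have hBxi := mulVec_pos_of_pos hB hx.1 (ne_zero_of_mem_stdSimplex hx) i
  rw [hBx, Pi.smul_apply, smul_eq_mul] at hBxi
  exact (hx.1 i).lt_of_ne fun h => by simp [← h] at hBxi

theorem exists_eigenvector_sum_sqrt_le [Nonempty ι] {A : Matrix ι ι ℝ} (hA : ∀ i j, 0 ≤ A i j) :
    ∃ r : ℝ, ∃ x ∈ stdSimplex ℝ ι, A *ᵥ x = r • x ∧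
      ∑ i, ∑ j, √(A i j * A j i) ≤ Fintype.card ι * r := by
  set J : Matrix ι ι ℝ := of fun _ _ => 1
  set E := (Icc (0 : ℝ) 1 ×ˢ Icc (0 : ℝ) (∑ i, ∑ j, (A + J) i j) ×ˢ stdSimplex ℝ ι) ∩
    {p : ℝ × ℝ × (ι → ℝ) | (A + p.1 • J) *ᵥ p.2.2 = p.2.1 • p.2.2 ∧
      ∑ i, ∑ j, √(A i j * A j i) ≤ Fintype.card ι * p.2.1}
  have hE : IsCompact E :=
    (isCompact_Icc.prod (isCompact_Icc.prod (isCompact_stdSimplex ℝ ι))).inter_right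
      ((isClosed_eq (by fun_prop) (by fun_prop)).inter (isClosed_le continuous_const
        (continuous_const.mul (continuous_fst.comp continuous_snd))))
  have hIoc : Ioc 0 1 ⊆ Prod.fst '' E := by
    rintro ε ⟨hε₀, hε₁⟩
    have hpos : ∀ i j, 0 < (A + ε • J) i j := fun i j => by
      simpa [J] using add_pos_of_nonneg_of_pos (hA i j) hε₀
    obtain ⟨r, hr, x, hx, hx_pos, hBx⟩ := exists_pos_eigenvector_of_pos hpos
    refine ⟨(ε, r, x), ⟨⟨⟨hε₀.le, hε₁⟩, ⟨hr, ?_⟩, hx⟩, hBx, ?_⟩, rfl⟩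
    · refine (le_sum_of_smul_le_mulVec (fun i j => (hpos i j).le) hx hBx.ge).trans ?_
      gcongr with i _ j _
      simpa [J] using hε₁
    · calc ∑ i, ∑ j, √(A i j * A j i) ≤ ∑ i, ∑ j, √((A + ε • J) i j * (A + ε • J) j i) := by
            gcongr with i _ j _ <;> simp [J, hA, add_nonneg, hε₀.le]
        _ ≤ Fintype.card ι * r :=
            sum_sqrt_mul_le_card_mul_of_mulVec_le (fun i j => (hpos i j).le) hx_pos hBx.le
  have h0 : (0 : ℝ) ∈ Prod.fst '' E := (hE.image continuous_fst).isClosed.closure_subset_iff.2 hIoc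
    (by simp [closure_Ioc zero_ne_one])
  obtain ⟨⟨_, r, x⟩, ⟨⟨-, -, hx⟩, hAx, hsum⟩, rfl⟩ := h0
  exact ⟨r, x, hx, by simpa using hAx, hsum⟩

lemma mem_spectrum_of_mulVec_eq_smul {R : Type*} [CommRing R] [DecidableEq ι] {A : Matrix ι ι R}
    {r : R} {x : ι → R} (hx : x ≠ 0) (hAx : A *ᵥ x = r • x) : r ∈ spectrum R A := by
  rw [← spectrum_toLin']
  exact Module.End.HasEigenvalue.mem_spectrum
    (Module.End.hasEigenvalue_of_hasEigenvector ⟨Module.End.mem_eigenspace_iff.2 hAx, hx⟩)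

end Matrix

lemma spectrum.ofReal_le_spectralRadius {A : Type*} [Ring A] [Algebra ℝ A] {a : A} {r : ℝ}
    (hr : r ∈ spectrum ℝ a) : ENNReal.ofReal r ≤ spectralRadius ℝ a :=
  (Real.ofReal_le_enorm r).trans
    (le_iSup₂ (f := fun k (_ : k ∈ spectrum ℝ a) => (‖k‖₊ : ENNReal)) r hr)

/-- For an `n × n` matrix `A` with nonnegative real entries, the spectral radius satisfies
`r(A) ≥ (1/n) ∑_{i,j} √(a_{ij} a_{ji})`, the sum ranging over all ordered pairs. -/
theorem spectralRadius_ge_sum_sqrt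
    (n : ℕ) (hn : 0 < n) (A : Matrix (Fin n) (Fin n) ℝ) (hA : ∀ i j, 0 ≤ A i j) :
    ENNReal.ofReal ((1 / (n : ℝ)) * ∑ i : Fin n, ∑ j : Fin n, Real.sqrt (A i j * A j i))
      ≤ spectralRadius ℝ A := by
  have : NeZero n := ⟨hn.ne'⟩
  obtain ⟨r, x, hx, hAx, hsum⟩ := Matrix.exists_eigenvector_sum_sqrt_le hA
  refine (ENNReal.ofReal_le_ofReal ?_).trans (spectrum.ofReal_le_spectralRadius
    (Matrix.mem_spectrum_of_mulVec_eq_smul (ne_zero_of_mem_stdSimplex hx) hAx))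
  rw [one_div_mul_eq_div, div_le_iff₀' (by exact_mod_cast hn)]
  simpa using hsum
end

section
/- If S is a feasible set of links in the non-fading model (so a_S(i) ≤ 1 for every i ∈ S) and Q(i) denotes the probability that link i succeeds under Rayleigh fading when all links of S transmit (with success meaning the exponentially-distributed signal exceeds β times the sum of independent exponentially-distributed interferences with the given means), then Q(i) ≥ e^{−A(i)} ≥ 1/e for each i ∈ S, where A(i) = Σ_{j∈S∖{i}} a_j(i); hence the expected number of successful links is at least |S|/e. -/
/-! Given the total scaled interference `X = β Σ_j R_{ji}`, link `i` succeeds when the independent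
exponential signal of mean `S_i` exceeds `X`, which has conditional probability `e^{-X/S_i}`.
Hence `Q(i) = E[e^{-X/S_i}] ≥ e^{-E[X]/S_i} = e^{-A(i)}` by Jensen's inequality, and feasibility
gives `A(i) ≤ 1`. -/

open MeasureTheory ProbabilityTheory Finset
open Real Set

namespace ProbabilityTheory

lemma expMeasure_eq_withDensity (r : ℝ) :
    expMeasure r = volume.withDensity (exponentialPDF r) := rfl

lemma expMeasure_Ioi {r : ℝ} (hr : 0 < r) {t : ℝ} (ht : 0 ≤ t) :
    expMeasure r (Ioi t) = ENNReal.ofReal (exp (-(r * t))) := by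
  have := isProbabilityMeasure_expMeasure hr
  have hexp : exp (-(r * t)) ≤ 1 := exp_le_one_iff.2 (neg_nonpos.2 (mul_nonneg hr.le ht))
  rw [← compl_Iic, prob_compl_eq_one_sub measurableSet_Iic, expMeasure_eq_withDensity,
    withDensity_apply _ measurableSet_Iic, lintegral_exponentialPDF_eq_antiDeriv hr, if_pos ht,
    ENNReal.ofReal_sub _ (exp_pos _).le, ENNReal.ofReal_one,
    ENNReal.sub_sub_cancel ENNReal.one_ne_top (ENNReal.ofReal_le_one.2 hexp)]

lemma ae_nonneg_expMeasure (r : ℝ) : ∀ᵐ x ∂expMeasure r, 0 ≤ x := by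
  rw [expMeasure_eq_withDensity,
    ae_withDensity_iff (f := exponentialPDF r) (measurable_exponentialPDFReal r).ennreal_ofReal]
  exact ae_of_all _ fun x hx => not_lt.1 fun hneg => hx (exponentialPDF_of_neg hneg)

lemma lintegral_ofReal_expMeasure {r : ℝ} (hr : 0 < r) :
    ∫⁻ x, ENNReal.ofReal x ∂expMeasure r = ENNReal.ofReal r⁻¹ := by
  rw [lintegral_eq_lintegral_meas_lt _ (ae_nonneg_expMeasure r) aemeasurable_id]
  refine (setLIntegral_congr_fun measurableSet_Ioi
    fun t (ht : 0 < t) => expMeasure_Ioi hr ht.le).trans ?_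
  rw [← ofReal_integral_eq_lintegral_ofReal]
  · simp_rw [← neg_mul]
    rw [integral_exp_mul_Ioi (neg_neg_of_pos hr), mul_zero, exp_zero, neg_div_neg_eq, one_div]
  · exact (by simpa only [neg_mul] using exp_neg_integrableOn_Ioi 0 hr : IntegrableOn _ _ _)
  · exact ae_of_all _ fun t => (exp_pos _).le

lemma integrable_id_expMeasure {r : ℝ} (hr : 0 < r) : Integrable (fun x => x) (expMeasure r) :=
  ⟨aestronglyMeasurable_id, (hasFiniteIntegral_iff_ofReal (ae_nonneg_expMeasure r)).2
    (by rw [lintegral_ofReal_expMeasure hr]; exact ENNReal.ofReal_lt_top)⟩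

lemma integral_id_expMeasure {r : ℝ} (hr : 0 < r) : ∫ x, x ∂expMeasure r = r⁻¹ := by
  rw [integral_eq_lintegral_of_nonneg_ae (ae_nonneg_expMeasure r) aestronglyMeasurable_id,
    lintegral_ofReal_expMeasure hr, ENNReal.toReal_ofReal (inv_nonneg.2 hr.le)]

section RandomVariables

variable {Ω : Type*} [MeasurableSpace Ω] {P : Measure Ω} {X Y : Ω → ℝ} {r : ℝ}

lemma ae_nonneg_of_map_eq_expMeasure (hX : Measurable X) (hXd : P.map X = expMeasure r) :
    0 ≤ᵐ[P] X :=
  show ∀ᵐ ω ∂P, 0 ≤ X ω from ae_of_ae_map hX.aemeasurable (hXd ▸ ae_nonneg_expMeasure r)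

lemma integrable_of_map_eq_expMeasure (hr : 0 < r) (hX : Measurable X)
    (hXd : P.map X = expMeasure r) : Integrable X P :=
  (integrable_map_measure aestronglyMeasurable_id hX.aemeasurable).1
    (hXd ▸ integrable_id_expMeasure hr)

lemma integral_eq_inv_of_map_eq_expMeasure (hr : 0 < r) (hX : Measurable X)
    (hXd : P.map X = expMeasure r) : ∫ ω, X ω ∂P = r⁻¹ := by
  rw [← integral_id_expMeasure hr, ← hXd]
  exact (integral_map (f := fun x => x) hX.aemeasurable aestronglyMeasurable_id).symm

lemma measure_lt_eq_lintegral_map_Ioi [IsFiniteMeasure P] (hXY : IndepFun X Y P)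
    (hX : Measurable X) (hY : Measurable Y) :
    P {ω | X ω < Y ω} = ∫⁻ ω, P.map Y (Ioi (X ω)) ∂P := by
  have hlt : MeasurableSet {p : ℝ × ℝ | p.1 < p.2} := measurableSet_lt measurable_fst measurable_snd
  have hprod := (indepFun_iff_map_prod_eq_prod_map_map hX.aemeasurable hY.aemeasurable).1 hXY
  rw [show {ω | X ω < Y ω} = (fun ω => (X ω, Y ω)) ⁻¹' {p | p.1 < p.2} from rfl,
    ← Measure.map_apply (hX.prodMk hY) hlt, hprod, Measure.prod_apply hlt,
    lintegral_map _ hX]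
  · rfl
  · exact Antitone.measurable fun _ _ hst => measure_mono (Set.Ioi_subset_Ioi hst)

lemma ofReal_exp_neg_mul_integral_le_measure_lt [IsProbabilityMeasure P] (hr : 0 < r)
    (hXY : IndepFun X Y P) (hX : Measurable X) (hY : Measurable Y)
    (hYd : P.map Y = expMeasure r) (hX0 : 0 ≤ᵐ[P] X) (hXint : Integrable X P) :
    ENNReal.ofReal (exp (-(r * ∫ ω, X ω ∂P))) ≤ P {ω | X ω < Y ω} := by
  have hexp_le_one : ∀ᵐ ω ∂P, ‖exp (-(r * X ω))‖ ≤ 1 := hX0.mono fun ω hω => by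
    rw [norm_of_nonneg (exp_pos _).le, exp_le_one_iff, neg_nonpos]
    exact mul_nonneg hr.le hω
  have hint : Integrable (fun ω => exp (-(r * X ω))) P :=
    (integrable_const 1).mono' (by fun_prop) hexp_le_one
  have hsucc : P {ω | X ω < Y ω} = ENNReal.ofReal (∫ ω, exp (-(r * X ω)) ∂P) := by
    rw [measure_lt_eq_lintegral_map_Ioi hXY hX hY, hYd,
      ofReal_integral_eq_lintegral_ofReal hint (ae_of_all _ fun ω => (exp_pos _).le)]
    exact lintegral_congr_ae (hX0.mono fun ω hω => expMeasure_Ioi hr hω)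
  have hjensen := convexOn_exp.map_integral_le (f := fun ω => -(r * X ω))
    continuous_exp.continuousOn isClosed_univ
    (ae_of_all _ fun ω => mem_univ _) (hXint.const_mul r).neg hint
  rw [integral_neg, integral_const_mul] at hjensen
  rw [hsucc]
  exact ENNReal.ofReal_le_ofReal hjensen

lemma iIndepFun.indepFun_finsetSum_elim {ι κ : Type*}
    {f : ι → Ω → ℝ} {g : κ → Ω → ℝ} (h : iIndepFun (Sum.elim f g) P)
    (hf : ∀ i, Measurable (f i)) (hg : ∀ k, Measurable (g k)) (s : Finset κ) (i : ι) :
    IndepFun (fun ω => ∑ k ∈ s, g k ω) (f i) P := by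
  have hinl : Sum.inl i ∉ s.map .inr := by simp
  simpa only [Finset.sum_map, Function.Embedding.inr_apply, Sum.elim_inr, Sum.elim_inl,
    Finset.sum_fn] using
    h.indepFun_finsetSum_of_notMem (Sum.forall.2 ⟨hf, hg⟩) hinl

lemma ofReal_exp_neg_sum_le_measure_mul_sum_lt [IsProbabilityMeasure P] {κ : Type*}
    {s : Finset κ} {Z : κ → Ω → ℝ} {m : κ → ℝ} {S β : ℝ} (hS : 0 < S)
    (hm : ∀ k ∈ s, 0 < m k) (hβ : 0 ≤ β) (hZ : ∀ k ∈ s, Measurable (Z k)) (hY : Measurable Y)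
    (hZd : ∀ k ∈ s, P.map (Z k) = expMeasure (1 / m k)) (hYd : P.map Y = expMeasure (1 / S))
    (hind : IndepFun (fun ω => ∑ k ∈ s, Z k ω) Y P) :
    ENNReal.ofReal (exp (-∑ k ∈ s, β * m k / S)) ≤ P {ω | β * ∑ k ∈ s, Z k ω < Y ω} := by
  have hZint : ∀ k ∈ s, Integrable (Z k) P := fun k hk =>
    integrable_of_map_eq_expMeasure (one_div_pos.2 (hm k hk)) (hZ k hk) (hZd k hk)
  have hX0 : 0 ≤ᵐ[P] fun ω => β * ∑ k ∈ s, Z k ω := by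
    have hZ0 : ∀ᵐ ω ∂P, ∀ k ∈ s, 0 ≤ Z k ω := (Filter.eventually_all_finset s).2
      fun k hk => ae_nonneg_of_map_eq_expMeasure (hZ k hk) (hZd k hk)
    exact hZ0.mono fun ω hω => mul_nonneg hβ (Finset.sum_nonneg hω)
  have hmean : 1 / S * ∫ ω, β * ∑ k ∈ s, Z k ω ∂P = ∑ k ∈ s, β * m k / S := by
    rw [integral_const_mul, integral_finsetSum s hZint, Finset.mul_sum, Finset.mul_sum]
    refine Finset.sum_congr rfl fun k hk => ?_
    rw [integral_eq_inv_of_map_eq_expMeasure (one_div_pos.2 (hm k hk)) (hZ k hk) (hZd k hk)]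
    field_simp
  have hX : Measurable fun ω => β * ∑ k ∈ s, Z k ω :=
    (Finset.measurable_sum s hZ).const_mul β
  have hXY : IndepFun (fun ω => β * ∑ k ∈ s, Z k ω) Y P :=
    hind.comp (measurable_const_mul β) measurable_id
  rw [← hmean]
  exact ofReal_exp_neg_mul_integral_le_measure_lt (one_div_pos.2 hS) hXY hX hY hYd hX0
    ((integrable_finsetSum s hZint).const_mul β)

end RandomVariables

end ProbabilityTheory

/-- If `S` is feasible in the non-fading model (total affectance at most `1` on each link),
then under Rayleigh fading (independent exponential signals and interferences with the given
means), every link succeeds with probability at least `e^{-A(i)} ≥ 1/e`, and the expected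
number of successful links is at least `|S|/e`. -/
theorem rayleigh_feasible_success_probability
    {Ω : Type*} [MeasurableSpace Ω] (P : Measure Ω) [IsProbabilityMeasure P]
    {ι : Type*} [Fintype ι] [DecidableEq ι]
    (Sval : ι → ℝ) (Ival : ι → ι → ℝ)
    (hS : ∀ i, 0 < Sval i) (hI : ∀ j i, 0 < Ival j i)
    (β : ℝ) (hβ : 0 < β)
    (hfeas : ∀ i, ∑ j ∈ Finset.univ.erase i, β * Ival j i / Sval i ≤ 1)
    (R : ι → Ω → ℝ) (RI : ι → ι → Ω → ℝ)
    (hRmeas : ∀ i, Measurable (R i)) (hRImeas : ∀ j i, Measurable (RI j i))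
    (hRd : ∀ i, P.map (R i) = expMeasure (1 / Sval i))
    (hRId : ∀ j i, P.map (RI j i) = expMeasure (1 / Ival j i))
    (hindep : iIndepFun
      (Sum.elim R (fun q : ι × ι => RI q.1 q.2)) P) :
    (∀ i, ENNReal.ofReal (Real.exp (-(∑ j ∈ Finset.univ.erase i, β * Ival j i / Sval i)))
        ≤ P {ω | β * ∑ j ∈ Finset.univ.erase i, RI j i ω < R i ω}) ∧
    (∀ i, ENNReal.ofReal (Real.exp (-1))
        ≤ P {ω | β * ∑ j ∈ Finset.univ.erase i, RI j i ω < R i ω}) ∧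
    ((Fintype.card ι : ℝ) / Real.exp 1 ≤
      ∑ i, (P {ω | β * ∑ j ∈ Finset.univ.erase i, RI j i ω < R i ω}).toReal) := by
  have hsucc : ∀ i, ENNReal.ofReal (exp (-(∑ j ∈ univ.erase i, β * Ival j i / Sval i)))
      ≤ P {ω | β * ∑ j ∈ univ.erase i, RI j i ω < R i ω} := fun i => by
    have hind := hindep.indepFun_finsetSum_elim hRmeas (fun q => hRImeas q.1 q.2)
      ((univ.erase i).map (Function.Embedding.sectL ι i)) i
    simp only [Finset.sum_map, Function.Embedding.sectL_apply] at hind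
    exact ofReal_exp_neg_sum_le_measure_mul_sum_lt (hS i) (fun j _ => hI j i) hβ.le
      (fun j _ => hRImeas j i) (hRmeas i) (fun j _ => hRId j i) (hRd i) hind
  have hsucc_one : ∀ i, ENNReal.ofReal (exp (-1))
      ≤ P {ω | β * ∑ j ∈ univ.erase i, RI j i ω < R i ω} := fun i =>
    (ENNReal.ofReal_le_ofReal (exp_le_exp.2 (neg_le_neg (hfeas i)))).trans (hsucc i)
  refine ⟨hsucc, hsucc_one, ?_⟩
  calc (Fintype.card ι : ℝ) / exp 1 = ∑ _i : ι, exp (-1) := by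
        rw [sum_const, card_univ, nsmul_eq_mul, exp_neg, div_eq_mul_inv]
    _ ≤ _ := sum_le_sum fun i _ =>
        (ENNReal.ofReal_le_iff_le_toReal (measure_ne_top P _)).1 (hsucc_one i)
end

section
/- Let H be a finite set of links with weights w_i ≥ 0, success probabilities Q(i) ≤ q_i, and expected affectances A(i) = Σ_{j∈H} q_j a_j(i) ≤ k for all i ∈ H (k > 0 fixed). Form a random set X including each i ∈ H independently with probability q_i/(2k), and let S_X = { i ∈ X : Σ_{j∈X, j≠i} a_j(i) ≤ 1 }. Then E[Σ_{i∈S_X} w_i] ≥ (1/(4k))·Σ_{i∈H} w_i q_i ≥ (1/(4k))·Σ_{i∈H} w_i Q(i). In particular there exists a deterministic subset S ⊆ H with affectance at most 1 on each of its members and weight at least (1/(4k))·Σ_{i∈H} w_i Q(i). -/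
/-!
The expected affectance on a link `i` from the sampled set is `∑ⱼ qⱼ aⱼ(i) / (2k) ≤ 1/2`, so by
Markov's inequality it is at most `1` with probability at least `1/2`. This event depends only on
the coins of the other links, hence is independent of `i` being sampled, and `i` survives in the
feasible part with probability at least `qᵢ/(4k)`. Linearity of expectation gives the bound on the
expected weight, and some outcome is at least as heavy as the expectation.
-/

open MeasureTheory ProbabilityTheory Finset

section RandomFinset

variable {Ω ι : Type*} [Fintype ι]

lemma sum_randomFinset_eq_sum_indicator (S : Ω → Finset ι) (w : ι → ℝ) (ω : Ω) :
    ∑ i ∈ S ω, w i = ∑ i, {ω | i ∈ S ω}.indicator (fun _ => w i) ω := by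
  classical
  simp only [Set.indicator_apply, Set.mem_ofPred_eq, sum_ite_mem, univ_inter]

variable [MeasurableSpace Ω] {P : Measure Ω} [IsFiniteMeasure P] {S : Ω → Finset ι}

lemma integrable_randomFinset_sum (hS : ∀ i, MeasurableSet {ω | i ∈ S ω}) (w : ι → ℝ) :
    Integrable (fun ω => ∑ i ∈ S ω, w i) P := by
  simp_rw [sum_randomFinset_eq_sum_indicator S w]
  exact integrable_finsetSum _ fun i _ => (integrable_const (w i)).indicator (hS i)

lemma integral_randomFinset_sum (hS : ∀ i, MeasurableSet {ω | i ∈ S ω}) (w : ι → ℝ) :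
    ∫ ω, ∑ i ∈ S ω, w i ∂P = ∑ i, P.real {ω | i ∈ S ω} * w i := by
  simp_rw [sum_randomFinset_eq_sum_indicator S w]
  rw [integral_finsetSum _ fun i _ => (integrable_const (w i)).indicator (hS i)]
  simp_rw [integral_indicator_const _ (hS _), smul_eq_mul]

end RandomFinset

lemma one_sub_integral_le_measureReal_le_one {Ω : Type*} [MeasurableSpace Ω] {P : Measure Ω}
    [IsProbabilityMeasure P] {Y : Ω → ℝ} (hY : 0 ≤ᵐ[P] Y) (hint : Integrable Y P) :
    1 - ∫ ω, Y ω ∂P ≤ P.real {ω | Y ω ≤ 1} := by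
  have markov : P.real {ω | 1 ≤ Y ω} ≤ ∫ ω, Y ω ∂P := by
    simpa using mul_meas_ge_le_integral_of_nonneg hY hint 1
  have cover : (1 : ℝ) ≤ P.real {ω | 1 ≤ Y ω} + P.real {ω | Y ω ≤ 1} := calc
    (1 : ℝ) = P.real ({ω | 1 ≤ Y ω} ∪ {ω | Y ω ≤ 1}) := by
      rw [← probReal_univ (μ := P)]
      congr 1
      ext ω
      simp [le_total]
    _ ≤ _ := measureReal_union_le _ _
  linarith

lemma ProbabilityTheory.iIndepFun.indepFun_comp_of_notMem {Ω ι γ : Type*} [MeasurableSpace Ω]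
    {P : Measure Ω} {β : ι → Type*} [∀ i, MeasurableSpace (β i)] {f : ∀ i, Ω → β i}
    (hf : iIndepFun f P) (hmeas : ∀ i, Measurable (f i)) {i : ι} {s : Finset ι} (hi : i ∉ s)
    [MeasurableSpace γ] {g : (∀ j : s, β j) → γ} (hg : Measurable g) :
    IndepFun (f i) (fun ω => g fun j => f j ω) P := by
  exact (hf.indepFun_finset {i} s (disjoint_singleton_left.2 hi) hmeas).comp
    (measurable_pi_apply ⟨i, mem_singleton_self i⟩) hg

section Affectance

variable {ι : Type*} [DecidableEq ι] (a : ι → ι → ℝ)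

def affectance (X : Finset ι) (i : ι) : ℝ := ∑ j ∈ X.erase i, a j i

noncomputable def feasiblePart (X : Finset ι) : Finset ι := X.filter fun i => affectance a X i ≤ 1

variable {a}

lemma affectance_mono {X Y : Finset ι} {i : ι} (ha : ∀ j, 0 ≤ a j i) (h : X ⊆ Y) :
    affectance a X i ≤ affectance a Y i :=
  sum_le_sum_of_subset_of_nonneg (erase_subset_erase i h) fun j _ _ => ha j

lemma affectance_feasiblePart_le_one {X : Finset ι} {i : ι} (ha : ∀ j, 0 ≤ a j i)
    (hi : i ∈ feasiblePart a X) : affectance a (feasiblePart a X) i ≤ 1 :=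
  (affectance_mono ha (filter_subset _ X)).trans (mem_filter.1 hi).2

lemma affectance_filter_eq [Fintype ι] (b : ι → Bool) (i : ι) :
    affectance a (univ.filter fun j => b j = true) i =
      ∑ j : ↥(univ.erase i), if b j then a j i else 0 := by
  rw [affectance, ← filter_erase, sum_filter, ← sum_coe_sort]

end Affectance

section Sampling

variable {Ω ι : Type*} [Fintype ι] {B : ι → Ω → Bool}

def selected (B : ι → Ω → Bool) (ω : Ω) : Finset ι := univ.filter fun i => B i ω = true

variable [DecidableEq ι] {a : ι → ι → ℝ}

lemma feasiblePart_selected_eq_filter (ω : Ω) :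
    feasiblePart a (selected B ω) = univ.filter fun i => B i ω = true ∧
      ∑ j ∈ (univ.filter fun j => B j ω = true).erase i, a j i ≤ 1 := by
  rw [feasiblePart, selected, filter_filter]
  rfl

lemma mem_feasiblePart_selected_eq (i : ι) :
    {ω | i ∈ feasiblePart a (selected B ω)} =
      B i ⁻¹' {true} ∩ (fun ω => affectance a (selected B ω) i) ⁻¹' Set.Iic 1 := by
  ext ω
  simp only [feasiblePart, mem_filter]
  simp [selected]

variable [MeasurableSpace Ω] {P : Measure Ω}

omit [DecidableEq ι] in
lemma measurableSet_mem_selected (hmeas : ∀ i, Measurable (B i)) (i : ι) :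
    MeasurableSet {ω | i ∈ selected B ω} := by
  have h : {ω | i ∈ selected B ω} = B i ⁻¹' {true} := by ext; simp [selected]
  exact h ▸ hmeas i (measurableSet_singleton true)

lemma measurableSet_mem_erase_selected (hmeas : ∀ i, Measurable (B i)) (i j : ι) :
    MeasurableSet {ω | j ∈ (selected B ω).erase i} := by
  simp only [mem_erase, Set.ofPred_and]
  exact (MeasurableSet.const _).inter (measurableSet_mem_selected hmeas j)

lemma measurable_affectance_selected (hmeas : ∀ i, Measurable (B i)) (i : ι) :
    Measurable fun ω => affectance a (selected B ω) i := by
  simp_rw [selected, affectance_filter_eq]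
  exact (Measurable.of_discrete (f := fun v : ↥(univ.erase i) → Bool =>
    ∑ j, if v j then a j i else 0)).comp (measurable_pi_lambda _ fun j => hmeas j)

lemma measurableSet_mem_feasiblePart_selected (hmeas : ∀ i, Measurable (B i)) (i : ι) :
    MeasurableSet {ω | i ∈ feasiblePart a (selected B ω)} := by
  rw [mem_feasiblePart_selected_eq]
  exact (hmeas i (measurableSet_singleton true)).inter
    (measurable_affectance_selected hmeas i measurableSet_Iic)

lemma integrable_affectance_selected [IsFiniteMeasure P] (hmeas : ∀ i, Measurable (B i))
    (i : ι) : Integrable (fun ω => affectance a (selected B ω) i) P :=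
  integrable_randomFinset_sum (measurableSet_mem_erase_selected hmeas i) (a · i)

lemma integral_affectance_selected_le [IsFiniteMeasure P] (hmeas : ∀ i, Measurable (B i))
    {i : ι} (ha : ∀ j, 0 ≤ a j i) :
    ∫ ω, affectance a (selected B ω) i ∂P ≤ ∑ j, P.real {ω | B j ω = true} * a j i := by
  unfold affectance
  rw [integral_randomFinset_sum (measurableSet_mem_erase_selected hmeas i)]
  refine sum_le_sum fun j _ => mul_le_mul_of_nonneg_right (measureReal_mono ?_) (ha j)
  intro ω hω
  simpa [selected] using (mem_erase.1 hω).2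

lemma indepFun_affectance_selected (hmeas : ∀ i, Measurable (B i)) (hindep : iIndepFun B P)
    (i : ι) : IndepFun (B i) (fun ω => affectance a (selected B ω) i) P := by
  simp_rw [selected, affectance_filter_eq]
  exact hindep.indepFun_comp_of_notMem hmeas (notMem_erase i univ)
    (Measurable.of_discrete (f := fun v : ↥(univ.erase i) → Bool =>
      ∑ j, if v j then a j i else 0))

variable [IsProbabilityMeasure P]

lemma half_measureReal_le_measureReal_mem_feasiblePart
    (hmeas : ∀ i, Measurable (B i)) (hindep : iIndepFun B P) {i : ι} (ha : ∀ j, 0 ≤ a j i)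
    (hsmall : ∑ j, P.real {ω | B j ω = true} * a j i ≤ 1 / 2) :
    P.real {ω | B i ω = true} / 2 ≤ P.real {ω | i ∈ feasiblePart a (selected B ω)} := by
  have markov : 1 / 2 ≤ P.real {ω | affectance a (selected B ω) i ≤ 1} := by
    have := one_sub_integral_le_measureReal_le_one
      (Y := fun ω => affectance a (selected B ω) i)
      (Filter.Eventually.of_forall fun ω => sum_nonneg fun j _ => ha j)
      (integrable_affectance_selected (P := P) hmeas i)
    linarith [(integral_affectance_selected_le (P := P) hmeas ha).trans hsmall]
  have indep : P.real {ω | i ∈ feasiblePart a (selected B ω)} =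
      P.real {ω | B i ω = true} * P.real {ω | affectance a (selected B ω) i ≤ 1} := by
    rw [mem_feasiblePart_selected_eq, measureReal_def,
      (indepFun_affectance_selected hmeas hindep i).measure_inter_preimage_eq_mul _ _
        (measurableSet_singleton true) measurableSet_Iic, ENNReal.toReal_mul]
    rfl
  rw [indep]
  linarith [mul_le_mul_of_nonneg_left markov
    (measureReal_nonneg (μ := P) (s := {ω | B i ω = true}))]

lemma sum_half_measureReal_mul_le_integral_feasiblePart
    (hmeas : ∀ i, Measurable (B i)) (hindep : iIndepFun B P) {w : ι → ℝ} (hw : ∀ i, 0 ≤ w i)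
    (ha : ∀ j i, 0 ≤ a j i) (hsmall : ∀ i, ∑ j, P.real {ω | B j ω = true} * a j i ≤ 1 / 2) :
    ∑ i, P.real {ω | B i ω = true} / 2 * w i ≤
      ∫ ω, ∑ i ∈ feasiblePart a (selected B ω), w i ∂P := by
  rw [integral_randomFinset_sum (measurableSet_mem_feasiblePart_selected hmeas)]
  exact sum_le_sum fun i _ => mul_le_mul_of_nonneg_right
    (half_measureReal_le_measureReal_mem_feasiblePart hmeas hindep (ha · i) (hsmall i)) (hw i)

end Sampling

/-- Probabilistic sparsification: if every link `i ∈ H` has expected affectance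
`A(i) = ∑_j q_j a_j(i) ≤ k` and success probability `Q(i) ≤ q_i`, and a random set `X`
includes each link independently with probability `q_i/(2k)`, then the expected weight of
the feasible part `S_X = {i ∈ X : a_X(i) ≤ 1}` is at least `(1/(4k))·∑ᵢ wᵢ qᵢ ≥
(1/(4k))·∑ᵢ wᵢ Q(i)`; in particular some deterministic feasible subset has weight at least
`(1/(4k))·∑ᵢ wᵢ Q(i)`. -/
theorem probabilistic_sparsification
    {Ω : Type*} [MeasurableSpace Ω] (P : Measure Ω) [IsProbabilityMeasure P]
    {ι : Type*} [Fintype ι] [DecidableEq ι]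
    (w : ι → ℝ) (hw : ∀ i, 0 ≤ w i)
    (a : ι → ι → ℝ) (ha : ∀ j i, 0 ≤ a j i)
    (q : ι → ℝ) (hq : ∀ i, q i ∈ Set.Icc (0 : ℝ) 1)
    (Q : ι → ℝ) (hQ : ∀ i, 0 ≤ Q i ∧ Q i ≤ q i)
    (k : ℝ) (hk : 0 < k)
    (hA : ∀ i, ∑ j, q j * a j i ≤ k)
    (B : ι → Ω → Bool) (hmeas : ∀ i, Measurable (B i))
    (hindep : iIndepFun B P)
    (hprob : ∀ i, P {ω | B i ω = true} = ENNReal.ofReal (q i / (2 * k))) :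
    ((1 / (4 * k)) * ∑ i, w i * q i ≤
      ∫ ω, ∑ i ∈ Finset.univ.filter (fun i => B i ω = true ∧
        ∑ j ∈ (Finset.univ.filter fun j => B j ω = true).erase i, a j i ≤ 1), w i ∂P) ∧
    ((1 / (4 * k)) * ∑ i, w i * Q i ≤
      ∫ ω, ∑ i ∈ Finset.univ.filter (fun i => B i ω = true ∧
        ∑ j ∈ (Finset.univ.filter fun j => B j ω = true).erase i, a j i ≤ 1), w i ∂P) ∧
    (∃ S : Finset ι, (∀ i ∈ S, ∑ j ∈ S.erase i, a j i ≤ 1) ∧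
      (1 / (4 * k)) * ∑ i, w i * Q i ≤ ∑ i ∈ S, w i) := by
  simp only [← feasiblePart_selected_eq_filter]
  have hp : ∀ i, P.real {ω | B i ω = true} = q i / (2 * k) := fun i => by
    rw [measureReal_def, hprob, ENNReal.toReal_ofReal (div_nonneg (hq i).1 (by positivity))]
  have hsmall : ∀ i, ∑ j, P.real {ω | B j ω = true} * a j i ≤ 1 / 2 := fun i => calc
    ∑ j, P.real {ω | B j ω = true} * a j i = (∑ j, q j * a j i) / (2 * k) := by
      simp_rw [hp, sum_div, div_mul_eq_mul_div]
    _ ≤ k / (2 * k) := by gcongr; exact hA i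
    _ = 1 / 2 := by field_simp
  have hq_weight : (1 / (4 * k)) * ∑ i, w i * q i ≤
      ∫ ω, ∑ i ∈ feasiblePart a (selected B ω), w i ∂P := calc
    (1 / (4 * k)) * ∑ i, w i * q i = ∑ i, P.real {ω | B i ω = true} / 2 * w i := by
      simp_rw [hp, mul_sum]; congr! 1 with i; field_simp; ring
    _ ≤ _ := sum_half_measureReal_mul_le_integral_feasiblePart hmeas hindep hw ha hsmall
  have hQ_weight : (1 / (4 * k)) * ∑ i, w i * Q i ≤
      ∫ ω, ∑ i ∈ feasiblePart a (selected B ω), w i ∂P :=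
    le_trans (by gcongr with i; exacts [hw i, (hQ i).2]) hq_weight
  obtain ⟨ω, hω⟩ := exists_integral_le
    (integrable_randomFinset_sum (P := P) (measurableSet_mem_feasiblePart_selected hmeas) w)
  exact ⟨hq_weight, hQ_weight, feasiblePart a (selected B ω),
    fun i hi => affectance_feasiblePart_le_one (ha · i) hi, hQ_weight.trans hω⟩
end
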